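/- If H_1, H_2, H_3 are three mutually orthogonal planes in ℝ³, then the set Γ = {(t, t², t³) : t ≥ 2} intersects some H_i in at most one point. -/

import Mathlib

open scoped InnerProductSpace

/-- The moment curve in `ℝ³`: `γ(t) = (t, t², t³)`. -/
noncomputable def momentCurve3 : ℝ → EuclideanSpace ℝ (Fin 3) :=
  fun t => WithLp.toLp 2 (fun i : Fin 3 => t ^ ((i : ℕ) + 1))

lemma key_ineq (a b d s t : ℝ) (ha : a^2 + b^2 + d^2 = 1) (hd : 1/3 ≤ d^2)
    (hs : 2 ≤ s) (ht : 2 ≤ t) :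
    a + b * (s + t) + d * (s^2 + s*t + t^2) ≠ 0 := by
  intro h
  have hB : 4 ≤ s + t := by linarith
  have hA2 : 9 * (s+t)^2 ≤ (s^2 + s*t + t^2)^2 := by
    nlinarith [sq_nonneg (s - t), sq_nonneg (s + t - 4), sq_nonneg (s + t)]
  have hab : a^2 + b^2 ≤ 2/3 := by linarith
  have hCS : (a + b*(s+t))^2 ≤ (1 + (s+t)^2) * (a^2 + b^2) := by
    nlinarith [sq_nonneg (a*(s+t) - b)]
  have heq : (a + b*(s+t))^2 = d^2 * (s^2 + s*t + t^2)^2 := by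
    have h' : a + b*(s+t) = -(d * (s^2 + s*t + t^2)) := by linarith
    rw [h']; ring
  have h13 : (1/3) * (s^2 + s*t + t^2)^2 ≤ d^2 * (s^2 + s*t + t^2)^2 := by
    nlinarith [sq_nonneg (s^2 + s*t + t^2)]
  nlinarith [hCS, heq, h13, hA2, hab, hB, sq_nonneg (s+t)]

/-- If `H_1, H_2, H_3` are three mutually orthogonal planes in `ℝ³`, then
`Γ = {(t, t², t³) : t ≥ 2}` intersects some `H_i` in at most one point. -/
theorem exists_plane_meeting_tail_in_at_most_one_point
    (u : Fin 3 → EuclideanSpace ℝ (Fin 3)) (c : Fin 3 → ℝ)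
    (hu : ∀ i, ‖u i‖ = 1) (horth : ∀ i j, i ≠ j → ⟪u i, u j⟫_ℝ = 0) :
    ∃ i : Fin 3,
      Set.Subsingleton (momentCurve3 '' Set.Ici (2 : ℝ) ∩ {x | ⟪x, u i⟫_ℝ = c i}) := by
  -- inner products are sums
  have hinner : ∀ x y : EuclideanSpace ℝ (Fin 3),
      ⟪x, y⟫_ℝ = x 0 * y 0 + x 1 * y 1 + x 2 * y 2 := by
    intro x y
    simp [PiLp.inner_apply, Fin.sum_univ_three, mul_comm]
  -- norms
  have hnorm : ∀ i, (u i 0)^2 + (u i 1)^2 + (u i 2)^2 = 1 := by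
    intro i
    have := real_inner_self_eq_norm_sq (u i)
    rw [hu i, hinner] at this
    nlinarith [this]
  -- columns of an orthogonal matrix are orthonormal: sum of squares of last coords = 1
  have hcol : (u 0 2)^2 + (u 1 2)^2 + (u 2 2)^2 = 1 := by
    set M : Matrix (Fin 3) (Fin 3) ℝ := fun i j => u i j with hM
    have h1 : M * M.transpose = 1 := by
      ext i j
      simp only [Matrix.mul_apply, Matrix.transpose_apply]
      simp only [hM]
      rcases eq_or_ne i j with rfl | hij
      · have := hnorm i
        simp [Fin.sum_univ_three, Matrix.one_apply]
        nlinarith [this]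
      · have := horth i j hij
        rw [hinner] at this
        simp [Fin.sum_univ_three, Matrix.one_apply, hij]
        linarith [this]
    have h2 : M.transpose * M = 1 := mul_eq_one_comm.mp h1
    have h3 := congrFun (congrFun h2 2) 2
    simp only [Matrix.mul_apply, Matrix.transpose_apply, Matrix.one_apply_eq,
      Fin.sum_univ_three] at h3
    simp only [hM] at h3
    nlinarith [h3]
  -- one of them has large last coordinate
  have hbig : ∃ i : Fin 3, 1/3 ≤ (u i 2)^2 := by
    by_contra hcon
    push_neg at hcon
    have := hcon 0; have := hcon 1; have := hcon 2
    linarith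
  obtain ⟨i, hi⟩ := hbig
  refine ⟨i, ?_⟩
  rintro x ⟨⟨s, hs, rfl⟩, hxc⟩ y ⟨⟨t, ht, rfl⟩, hyc⟩
  simp only [Set.mem_Ici] at hs ht
  have hgamma : ∀ r : ℝ, ⟪momentCurve3 r, u i⟫_ℝ
      = r * u i 0 + r^2 * u i 1 + r^3 * u i 2 := by
    intro r
    rw [hinner]
    simp [momentCurve3]
  have heq : s * u i 0 + s^2 * u i 1 + s^3 * u i 2
      = t * u i 0 + t^2 * u i 1 + t^3 * u i 2 := by
    rw [← hgamma, ← hgamma, hxc, hyc]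
  have hst : s = t := by
    by_contra hne
    have hfac : (s - t) * (u i 0 + u i 1 * (s + t) + u i 2 * (s^2 + s*t + t^2)) = 0 := by
      ring_nf
      nlinarith [heq]
    rcases mul_eq_zero.mp hfac with h | h
    · exact hne (by linarith [sub_eq_zero.mp h])
    · exact key_ineq (u i 0) (u i 1) (u i 2) s t (hnorm i) hi hs ht h
  rw [hst]
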